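/- arXiv:1805.00511 — 2 statements merged into one kernel-verified Lean document; each statement's English description precedes it below -/
import Mathlib

section
/- Let n ≥ 1 and let c_1, …, c_n be integers with 0 ≤ c_1 ≤ c_2 ≤ ⋯ ≤ c_n ≤ n. Then for every real number x, ∏_{i=1}^n (x + c_i − i + 1) = Σ_{k=0}^n r_{n−k}(B) · C(x, k) · k!, where B = B(c_1,…,c_n). -/
/-- Generalized binomial coefficient `C(x, m) = (1/m!)·∏_{j=0}^{m-1} (x - j)`. -/
noncomputable def genChoose (x : ℝ) (m : ℕ) : ℝ :=
  (∏ j ∈ Finset.range m, (x - (j : ℝ))) / (m.factorial : ℝ)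
/-- `r_m(B)`: the number of placements of `m` nonattacking rooks on the Ferrers board
whose `i`-th column has height `c i`: pairs `(I, f)` with `I` an `m`-element set of
columns and `f` an injective choice of rows with `f(i) ≤ c i` (1-indexed rows). -/
noncomputable def rB (n : ℕ) (c : Fin n → ℤ) (m : ℕ) : ℕ :=
  Nat.card {q : (s : Finset (Fin n)) × (↥s → Fin n) //
    q.1.card = m ∧ Function.Injective q.2 ∧ ∀ i, ((q.2 i : ℕ) : ℤ) < c i.1}

/-!
Let `B'` be the board formed by the first `n - 1` columns. Since the last column is the tallest,
a placement of `m + 1` rooks on `B` either leaves it empty, or puts its rook in one of the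
`c_n - m` rows below `c_n` left free by a placement of `m` rooks on `B'`. Hence
`r_{m+1}(B) = r_{m+1}(B') + (c_n - m) r_m(B')`. Writing `(x)_k` for the falling factorial,
`(x)_k (x + c_n - (n - 1)) = (x)_{k+1} + (c_n - m) (x)_k` whenever `m + k = n - 1`, so the
right-hand side satisfies the same recursion in `n` as the product.
-/

open Finset

lemma card_filter_eq_sum_card_filter_snoc {n : ℕ} {α : Type*} [Fintype α]
    (P : (Fin (n + 1) → α) → Prop) [DecidablePred P] :
    #{p | P p} = ∑ p : Fin n → α, #{a | P (Fin.snoc p a)} := by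
  rw [card_filter, ← (Fin.snocEquiv fun _ => α).sum_comp, Fintype.sum_prod_type_right]
  exact sum_congr rfl fun p _ => (card_filter _ _).symm

def sigmaFinsetEquivOption (α β : Type*) [Fintype α] [DecidableEq α] :
    (Σ s : Finset α, s → β) ≃ (α → Option β) where
  toFun q a := if ha : a ∈ q.1 then some (q.2 ⟨a, ha⟩) else none
  invFun p := ⟨({a | (p a).isSome} : Finset α), fun a => (p a).get (mem_filter.1 a.2).2⟩
  left_inv := by
    rintro ⟨s, f⟩
    dsimp only
    have hs :
        ({a | (if ha : a ∈ s then some (f ⟨a, ha⟩) else none).isSome} : Finset α) = s := by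
      ext a
      by_cases ha : a ∈ s <;> simp [ha]
    refine Sigma.ext hs
      (Function.hfunext (congrArg (fun t : Finset α => ↥t) hs) fun a a' haa' => ?_)
    obtain ⟨a', ha'⟩ := a'
    obtain rfl : a.1 = a' := (Subtype.heq_iff_coe_eq (Finset.ext_iff.1 hs)).1 haa'
    exact heq_of_eq (by simp [ha'])
  right_inv p := by
    funext a
    by_cases ha : (p a).isSome <;> simp_all

section sigmaFinsetEquivOption

variable {α β : Type*} [Fintype α] [DecidableEq α]

lemma mem_sigmaFinsetEquivOption_apply {s : Finset α} {f : s → β} {a : α} {b : β} :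
    b ∈ sigmaFinsetEquivOption α β ⟨s, f⟩ a ↔ ∃ ha : a ∈ s, f ⟨a, ha⟩ = b := by
  by_cases ha : a ∈ s <;> simp [sigmaFinsetEquivOption, ha]

lemma card_filter_isSome_sigmaFinsetEquivOption (q : Σ s : Finset α, s → β) :
    #{a | (sigmaFinsetEquivOption α β q a).isSome} = #q.1 :=
  congrArg (fun q => #q.1) ((sigmaFinsetEquivOption α β).symm_apply_apply q)

end sigmaFinsetEquivOption

section RookPlacement

variable {n ρ : ℕ}

/-- `r ∈ p i` means a rook in column `i`, row `r`; rows are `Fin ρ`. -/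
def IsRookPlacement (h : Fin n → ℕ) (p : Fin n → Option (Fin ρ)) : Prop :=
  (∀ i j, ∀ r ∈ p i, r ∈ p j → i = j) ∧ ∀ i, ∀ r ∈ p i, (r : ℕ) < h i

instance (h : Fin n → ℕ) : DecidablePred (IsRookPlacement (ρ := ρ) h) :=
  fun _ => by unfold IsRookPlacement; infer_instance

def rookCount (p : Fin n → Option (Fin ρ)) : ℕ := #{i | (p i).isSome}

def rookNumber (ρ : ℕ) (h : Fin n → ℕ) (m : ℕ) : ℕ :=
  #{p : Fin n → Option (Fin ρ) | IsRookPlacement h p ∧ rookCount p = m}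

lemma rookCount_eq_zero_iff {p : Fin n → Option (Fin ρ)} :
    rookCount p = 0 ↔ p = fun _ => none := by
  simp [rookCount, funext_iff]

lemma rookCount_le (p : Fin n → Option (Fin ρ)) : rookCount p ≤ n :=
  (card_filter_le _ _).trans_eq (card_fin n)

lemma rookCount_snoc (p : Fin n → Option (Fin ρ)) (o : Option (Fin ρ)) :
    rookCount (Fin.snoc p o : Fin (n + 1) → Option (Fin ρ)) =
      rookCount p + if o.isSome then 1 else 0 := by
  rw [rookCount, rookCount, card_filter, card_filter, Fin.sum_univ_castSucc]
  simp

lemma isRookPlacement_snoc {h : Fin (n + 1) → ℕ} {p : Fin n → Option (Fin ρ)}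
    {o : Option (Fin ρ)} :
    IsRookPlacement h (Fin.snoc p o : Fin (n + 1) → Option (Fin ρ)) ↔
      IsRookPlacement (Fin.init h) p ∧
        ∀ r ∈ o, (r : ℕ) < h (Fin.last n) ∧ ∀ i, r ∉ p i := by
  simp only [IsRookPlacement, Fin.forall_fin_succ', Fin.snoc_castSucc, Fin.snoc_last, Fin.init,
    Fin.castSucc_inj, Fin.castSucc_ne_last, (Fin.castSucc_ne_last _).symm, imp_false]
  grind

lemma IsRookPlacement.card_usedRows {h : Fin n → ℕ} {p : Fin n → Option (Fin ρ)}
    (hp : IsRookPlacement h p) : #{r : Fin ρ | ∃ i, r ∈ p i} = rookCount p := by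
  rw [rookCount, ← card_map .some, ← card_image_of_injOn (f := p)]
  · congr 1
    ext (_ | r)
    · simp [Option.ne_none_iff_isSome]
    · simp only [mem_map, mem_filter, mem_univ, true_and, mem_image, Option.mem_def,
        Function.Embedding.some_apply, Option.some_inj, exists_eq_right]
      exact exists_congr fun i => ⟨fun hi => ⟨hi ▸ rfl, hi⟩, And.right⟩
  · intro i hi j _ hij
    obtain ⟨r, hr⟩ := Option.isSome_iff_exists.1 (mem_filter.1 hi).2
    exact hp.1 i j r hr (hij ▸ hr)

lemma IsRookPlacement.card_freeRows_add_rookCount {h : Fin n → ℕ}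
    {p : Fin n → Option (Fin ρ)} (hp : IsRookPlacement h p) {H : ℕ} (hH : ∀ i, h i ≤ H)
    (hHρ : H ≤ ρ) :
    #{r : Fin ρ | (r : ℕ) < H ∧ ∀ i, r ∉ p i} + rookCount p = H := by
  have hused : ∀ r i, r ∈ p i → (r : ℕ) < H := fun r i hr => (hp.2 i r hr).trans_le (hH i)
  conv_rhs => rw [← min_eq_right hHρ, ← Fin.card_filter_val_lt]
  rw [← hp.card_usedRows, add_comm,
    ← card_filter_add_card_filter_not (s := {r : Fin ρ | (r : ℕ) < H})
      (fun r => ∃ i, r ∈ p i)]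
  congr 2 <;> ext r <;> simp only [mem_filter, mem_univ, true_and, not_exists]
  exact ⟨fun ⟨i, hi⟩ => ⟨hused r i hi, i, hi⟩, And.right⟩

lemma rookNumber_zero (h : Fin n → ℕ) : rookNumber ρ h 0 = 1 := by
  rw [rookNumber, card_eq_one]
  refine ⟨fun _ => none, eq_singleton_iff_unique_mem.2 ⟨?_, fun p hp => ?_⟩⟩
  · simp [IsRookPlacement, rookCount]
  · exact rookCount_eq_zero_iff.1 (mem_filter.1 hp).2.2

lemma rookNumber_eq_zero_of_lt (h : Fin n → ℕ) {m : ℕ} (hm : n < m) :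
    rookNumber ρ h m = 0 := by
  rw [rookNumber, card_eq_zero, filter_eq_empty_iff]
  exact fun p _ hp => (rookCount_le p).not_gt (hp.2 ▸ hm)

lemma card_filter_snoc_isRookPlacement (h : Fin (n + 1) → ℕ) (m : ℕ)
    (p : Fin n → Option (Fin ρ)) :
    #{o | IsRookPlacement h (Fin.snoc p o : Fin (n + 1) → Option (Fin ρ)) ∧
        rookCount (Fin.snoc p o : Fin (n + 1) → Option (Fin ρ)) = m + 1} =
      (if IsRookPlacement (Fin.init h) p ∧ rookCount p = m + 1 then 1 else 0) +
        if IsRookPlacement (Fin.init h) p ∧ rookCount p = m then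
          #{r : Fin ρ | (r : ℕ) < h (Fin.last n) ∧ ∀ i, r ∉ p i} else 0 := by
  rw [card_filter, Fintype.sum_option]
  by_cases hp : IsRookPlacement (Fin.init h) p
  · by_cases hm : rookCount p = m <;> simp [isRookPlacement_snoc, rookCount_snoc, hp, hm]
  · simp [isRookPlacement_snoc, hp]

/-- The deletion recursion `r_{m+1}(B) = r_{m+1}(B') + (h_last - m) r_m(B')`, with `m r_m(B')`
moved to the left to avoid truncated subtraction. -/
theorem rookNumber_succ_add_mul (h : Fin (n + 1) → ℕ)
    (hh : ∀ i, h (Fin.castSucc i) ≤ h (Fin.last n)) (hρ : h (Fin.last n) ≤ ρ) (m : ℕ) :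
    rookNumber ρ h (m + 1) + m * rookNumber ρ (Fin.init h) m =
      rookNumber ρ (Fin.init h) (m + 1) + h (Fin.last n) * rookNumber ρ (Fin.init h) m := by
  simp only [rookNumber]
  rw [card_filter_eq_sum_card_filter_snoc,
    sum_congr rfl fun p _ => card_filter_snoc_isRookPlacement h m p, sum_add_distrib,
    ← card_filter, ← sum_filter, add_assoc, mul_comm m, mul_comm (h _), ← smul_eq_mul,
    ← sum_const, ← sum_add_distrib, ← smul_eq_mul, ← sum_const]
  congr 1
  refine sum_congr rfl fun p hmem => ?_
  obtain ⟨hp, rfl⟩ := (mem_filter.1 hmem).2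
  exact hp.card_freeRows_add_rookCount hh hρ

theorem prod_eq_sum_rookNumber_mul_descPochhammer_eval (h : Fin n → ℕ) (hh : Monotone h)
    (hρ : ∀ i, h i ≤ ρ) (x : ℝ) :
    ∏ i : Fin n, (x + h i - i) =
      ∑ mk ∈ antidiagonal n, rookNumber ρ h mk.1 * (descPochhammer ℝ mk.2).eval x := by
  induction n with
  | zero => simp [rookNumber_zero]
  | succ n ih =>
    set a := rookNumber ρ (Fin.init h)
    set H := h (Fin.last n)
    set F : ℕ → ℝ := fun k => (descPochhammer ℝ k).eval x
    have hrec : ∀ m, (rookNumber ρ h (m + 1) : ℝ) = a (m + 1) + (H - m) * a m := by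
      intro m
      have := rookNumber_succ_add_mul h (fun i => hh (Fin.le_last _)) (hρ _) m
      rw [sub_mul, ← add_sub_assoc, eq_sub_iff_add_eq]
      exact_mod_cast this
    have hshift := Nat.sum_antidiagonal_succ' (n := n) (f := fun mk => (a mk.1 : ℝ) * F mk.2)
    have hshift' := Nat.sum_antidiagonal_succ (n := n) (f := fun mk => (a mk.1 : ℝ) * F mk.2)
    have ha₀ : a 0 = 1 := rookNumber_zero _
    have ha : a (n + 1) = 0 := rookNumber_eq_zero_of_lt _ n.lt_succ_self
    simp only [ha₀, ha, Nat.cast_zero, Nat.cast_one, zero_mul, one_mul, zero_add]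
      at hshift hshift'
    calc ∏ i : Fin (n + 1), (x + h i - i)
        = (∑ mk ∈ antidiagonal n, a mk.1 * F mk.2) * (x + H - n) := by
          rw [Fin.prod_univ_castSucc, ← ih (Fin.init h)
            (fun i j hij => hh (Fin.castSucc_le_castSucc_iff.2 hij)) (fun i => hρ _)]
          simp [Fin.init, H]
      _ = ∑ mk ∈ antidiagonal n, a mk.1 * F (mk.2 + 1)
            + ∑ mk ∈ antidiagonal n, (H - mk.1) * a mk.1 * F mk.2 := by
          rw [sum_mul, ← sum_add_distrib]
          refine sum_congr rfl fun mk hmk => ?_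
          rw [show F (mk.2 + 1) = F mk.2 * (x - mk.2) from descPochhammer_succ_eval _ _,
            ← mem_antidiagonal.1 hmk]
          push_cast
          ring
      _ = F (n + 1) + ∑ mk ∈ antidiagonal n, (a (mk.1 + 1) + (H - mk.1) * a mk.1) * F mk.2 := by
          simp only [add_mul, sum_add_distrib]
          linarith
      _ = ∑ mk ∈ antidiagonal (n + 1), rookNumber ρ h mk.1 * F mk.2 := by
          rw [Nat.sum_antidiagonal_succ, rookNumber_zero]
          simp [hrec]

end RookPlacement

lemma rB_eq_rookNumber (n : ℕ) (c : Fin n → ℤ) (m : ℕ) :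
    rB n c m = rookNumber n (fun i => (c i).toNat) m := by
  rw [rB, rookNumber, ← Fintype.card_subtype, ← Nat.card_eq_fintype_card]
  refine Nat.card_congr ((sigmaFinsetEquivOption _ _).subtypeEquiv fun ⟨s, f⟩ => ?_)
  simp only [IsRookPlacement, rookCount, mem_sigmaFinsetEquivOption_apply,
    card_filter_isSome_sigmaFinsetEquivOption, Int.lt_toNat, forall_exists_index,
    forall_apply_eq_imp_iff, Function.Injective, Subtype.forall, Subtype.mk.injEq]
  exact ⟨fun ⟨hm, hinj, hc⟩ => ⟨⟨fun i j hi hj h => (hinj j hj i hi h).symm, hc⟩, hm⟩,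
    fun ⟨⟨hinj, hc⟩, hm⟩ => ⟨hm, fun i hi j hj h => hinj i j hi hj h.symm, hc⟩⟩

lemma genChoose_mul_factorial (x : ℝ) (k : ℕ) :
    genChoose x k * k.factorial = (descPochhammer ℝ k).eval x := by
  rw [genChoose, descPochhammer_eval_eq_prod_range, div_mul_cancel₀ _ (by positivity)]

theorem statement1_general (n : ℕ) (c : Fin n → ℤ)
    (hc0 : ∀ i, 0 ≤ c i) (hmono : ∀ i j : Fin n, i ≤ j → c i ≤ c j)
    (hcn : ∀ i, c i ≤ (n : ℤ)) (x : ℝ) :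
    ∏ i : Fin n, (x + (c i : ℝ) - ((i : ℕ) : ℝ)) =
      ∑ k ∈ Finset.range (n + 1),
        (rB n c (n - k) : ℝ) * genChoose x k * (k.factorial : ℝ) := by
  have hc : ∀ i, (c i : ℝ) = (c i).toNat := fun i => by
    exact_mod_cast (Int.toNat_of_nonneg (hc0 i)).symm
  simp only [hc, rB_eq_rookNumber, mul_assoc, genChoose_mul_factorial]
  rw [prod_eq_sum_rookNumber_mul_descPochhammer_eval _
    (fun i j hij => Int.toNat_le_toNat (hmono i j hij)) (fun i => Int.toNat_le.2 (hcn i)),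
    ← Nat.sum_antidiagonal_swap, Nat.sum_antidiagonal_eq_sum_range_succ_mk]
  rfl

/-- Goldman–Joichi–White, rook polynomial form. For integers
`0 ≤ c 1 ≤ ⋯ ≤ c n ≤ n` and every real `x`,
`∏_{i=1}^n (x + c_i − i + 1) = Σ_{k=0}^n r_{n−k}(B) · C(x, k) · k!`. -/
theorem statement1 (n : ℕ) (hn : 1 ≤ n) (c : Fin n → ℤ)
    (hc0 : ∀ i, 0 ≤ c i) (hmono : ∀ i j : Fin n, i ≤ j → c i ≤ c j)
    (hcn : ∀ i, c i ≤ (n : ℤ)) (x : ℝ) :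
    ∏ i : Fin n, (x + (c i : ℝ) - ((i : ℕ) : ℝ)) =
      ∑ k ∈ Finset.range (n + 1),
        (rB n c (n - k) : ℝ) * genChoose x k * (k.factorial : ℝ) :=
  statement1_general n c hc0 hmono hcn x
end

section
/- Let λ be a partition of n and 1 ≤ m ≤ n. Then the number of quasi-Yamanouchi tableaux of shape λ with maximum entry exactly m equals the number of standard Young tableaux of shape λ with exactly m−1 descents. -/
/-- Cell membership: `(i, j)` (row `i` counted from the bottom, column `j`, both
0-indexed) is a cell of the Young diagram of the partition `p` (French notation). -/
def cellMem {n : ℕ} (p : Nat.Partition n) (i j : ℕ) : Prop :=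
  i < (p.parts.filter (fun a => j < a)).card

instance {n : ℕ} (p : Nat.Partition n) (i j : ℕ) : Decidable (cellMem p i j) := by
  unfold cellMem; infer_instance

/-- Semistandard Young tableaux of shape `p` (French convention): a filling of the
diagram of `p` by positive integers, weakly increasing left to right along rows and
strictly increasing up columns (row index increases going up). -/
structure SSYT {n : ℕ} (p : Nat.Partition n) where
  entry : ℕ → ℕ → ℕ
  pos : ∀ i j, cellMem p i j → 1 ≤ entry i j
  zeros : ∀ i j, ¬ cellMem p i j → entry i j = 0
  rowWeak : ∀ i j1 j2, j1 < j2 → cellMem p i j2 → entry i j1 ≤ entry i j2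
  colStrict : ∀ i1 i2 j, i1 < i2 → cellMem p i2 j → entry i1 j < entry i2 j
/-- Quasi-Yamanouchi: for every value `v ≥ 2` appearing in `T`, the leftmost occurrence
of `v` lies in a column weakly to the left of some occurrence of `v - 1` in a strictly
lower row. -/
def IsQY {n : ℕ} (p : Nat.Partition n) (T : SSYT p) : Prop :=
  ∀ v i j, 2 ≤ v → cellMem p i j → T.entry i j = v →
    (∀ i' j', cellMem p i' j' → T.entry i' j' = v → j ≤ j') →
    ∃ i' j', cellMem p i' j' ∧ T.entry i' j' = v - 1 ∧ i' < i ∧ j ≤ j'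
/-- `QYT_{=m}(p)`: the number of quasi-Yamanouchi tableaux of shape `p` with maximum
entry exactly `m`. -/
noncomputable def QYTeq {n : ℕ} (p : Nat.Partition n) (m : ℕ) : ℕ :=
  Nat.card {T : SSYT p // IsQY p T ∧ (∀ i j, cellMem p i j → T.entry i j ≤ m) ∧
    ∃ i j, cellMem p i j ∧ T.entry i j = m}
/-- A standard Young tableau: each of the values `1, …, n` appears in exactly one cell. -/
def IsSYT {n : ℕ} (p : Nat.Partition n) (T : SSYT p) : Prop :=
  ∀ v, 1 ≤ v → v ≤ n → ∃! c : ℕ × ℕ, cellMem p c.1 c.2 ∧ T.entry c.1 c.2 = v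
/-- The descent set of a standard Young tableau: those `i ∈ {1, …, n-1}` such that the
entry `i + 1` lies in a strictly higher row than the entry `i`. -/
def DesSet {n : ℕ} (p : Nat.Partition n) (T : SSYT p) : Set ℕ :=
  {i | 1 ≤ i ∧ i ≤ n - 1 ∧ ∃ r c r' c', cellMem p r c ∧ cellMem p r' c' ∧
    T.entry r c = i ∧ T.entry r' c' = i + 1 ∧ r < r'}

/-!
Standardization numbers the cells `1, …, n` in the order of their entries, equal entries from left
to right; destandardization sends the entry `v` of a standard tableau to one more than the number
of its descents below `v`. For a quasi-Yamanouchi tableau every value up to the maximum occurs, so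
consecutive standardized entries carry equal or consecutive values, and the quasi-Yamanouchi
condition makes the second case happen exactly at the descents. Hence the two maps are mutually
inverse bijections, and a maximum `m` corresponds to `m - 1` descents.
-/

open Finset

attribute [ext] SSYT

variable {n : ℕ} {p : Nat.Partition n}

lemma cellMem_of_col_le {i j j' : ℕ} (h : cellMem p i j) (hj : j' ≤ j) : cellMem p i j' :=
  h.trans_le <| Multiset.card_le_card <|
    Multiset.monotone_filter_right _ fun _ ha => hj.trans_lt ha

lemma cellMem_of_row_le {i i' j : ℕ} (h : cellMem p i j) (hi : i' ≤ i) : cellMem p i' j :=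
  hi.trans_lt h

lemma cellMem.lt {i j : ℕ} (h : cellMem p i j) : i < n ∧ j < n := by
  obtain ⟨a, ha⟩ := Multiset.card_pos_iff_exists_mem.mp (Nat.zero_lt_of_lt h)
  obtain ⟨ha, hja⟩ := Multiset.mem_filter.mp ha
  refine ⟨h.trans_le ?_, hja.trans_le (p.le_of_mem_parts ha)⟩
  calc _ ≤ Multiset.card p.parts := Multiset.card_le_card (Multiset.filter_le _ _)
    _ ≤ p.parts.sum := by simpa using Multiset.card_nsmul_le_sum fun _ => p.parts_pos
    _ = n := p.parts_sum

variable (p) in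
def cells : Finset (ℕ × ℕ) := {c ∈ range n ×ˢ range n | cellMem p c.1 c.2}

lemma mem_cells {c : ℕ × ℕ} : c ∈ cells p ↔ cellMem p c.1 c.2 := by
  simp only [cells, mem_filter, mem_product, mem_range, and_iff_right_iff_imp]
  exact cellMem.lt

lemma sum_card_filter_lt {N : ℕ} (s : Multiset ℕ) (hs : ∀ a ∈ s, a ≤ N) :
    ∑ j ∈ range N, Multiset.card (s.filter (j < ·)) = s.sum := by
  induction s using Multiset.induction with
  | empty => simp
  | cons a s ih =>
    have hrange : {j ∈ range N | j < a} = range a := by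
      have := hs a (Multiset.mem_cons_self a s)
      ext j; simp only [mem_filter, mem_range]; omega
    simp only [Multiset.filter_cons, Multiset.card_add, apply_ite Multiset.card,
      Multiset.card_singleton, Multiset.card_zero, sum_add_distrib, Multiset.sum_cons]
    rw [ih fun b hb => hs b (Multiset.mem_cons_of_mem hb), sum_boole, hrange, card_range,
      Nat.cast_id]

variable (p) in
lemma card_cells : #(cells p) = n := by
  rw [card_eq_sum_ones, sum_finset_product_right (cells p) (range n)
    (fun j => range (Multiset.card (p.parts.filter (j < ·))))]
  · simpa [p.parts_sum] using sum_card_filter_lt p.parts fun _ => p.le_of_mem_parts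
  · intro c
    rw [mem_cells, mem_range, mem_range]
    exact ⟨fun h => ⟨h.lt.2, h⟩, fun h => h.2⟩

namespace SSYT

variable {T : SSYT p}

lemma entry_le_entry {i j i' j' : ℕ} (hc : cellMem p i j) (hi : i' ≤ i) (hj : j' ≤ j) :
    T.entry i' j' ≤ T.entry i j := by
  have hrow : T.entry i' j' ≤ T.entry i' j := by
    rcases hj.eq_or_lt with rfl | hj
    · exact le_rfl
    · exact T.rowWeak i' j' j hj (cellMem_of_row_le hc hi)
  rcases hi.eq_or_lt with rfl | hi
  · exact hrow
  · exact hrow.trans (T.colStrict i' i j hi hc).le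

lemma col_lt_of_entry_lt {c c' : ℕ × ℕ} (hc : cellMem p c.1 c.2)
    (hlt : T.entry c.1 c.2 < T.entry c'.1 c'.2) (hrow : c'.1 ≤ c.1) : c.2 < c'.2 := by
  by_contra! hcol
  exact (T.entry_le_entry hc hrow hcol).not_gt hlt

lemma row_eq_of_entry_eq {r r' j : ℕ} (hc : cellMem p r j) (hc' : cellMem p r' j)
    (he : T.entry r j = T.entry r' j) : r = r' := by
  by_contra! hr
  rcases hr.lt_or_gt with hr | hr
  · exact (T.colStrict r r' j hr hc').ne he
  · exact (T.colStrict r' r j hr hc).ne he.symm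

lemma row_le_of_entry_eq {r j r' j' : ℕ} (hc : cellMem p r j) (hc' : cellMem p r' j')
    (he : T.entry r j = T.entry r' j') (hj : j ≤ j') : r' ≤ r := by
  rcases hj.eq_or_lt with rfl | hj
  · exact (row_eq_of_entry_eq hc hc' he).ge
  by_contra! hr
  have := T.colStrict r r' j hr (cellMem_of_col_le hc' hj.le)
  have := T.rowWeak r' j j' hj hc'
  omega

end SSYT

section Rank

variable {α β : Type*} [LinearOrder α] (s : Finset β) (f : β → α)

def rankBy (x : β) : ℕ := #{y ∈ s | f y ≤ f x}

variable {s f} {x y : β}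

lemma rankBy_lt_rankBy_iff (hy : y ∈ s) : rankBy s f x < rankBy s f y ↔ f x < f y := by
  refine ⟨fun h => ?_, fun h => card_lt_card ?_⟩
  · by_contra! hle
    exact h.not_ge <| card_le_card <| monotone_filter_right _ fun _ _ hz => hz.trans hle
  · refine (ssubset_iff_of_subset (monotone_filter_right _ fun _ _ hz => hz.trans h.le)).mpr
      ⟨y, by simp [hy], by simp [h]⟩

lemma rankBy_le_rankBy_iff (hx : x ∈ s) : rankBy s f x ≤ rankBy s f y ↔ f x ≤ f y := by
  simpa only [not_lt] using (rankBy_lt_rankBy_iff (f := f) (x := y) hx).not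

lemma rankBy_mem_Icc (hx : x ∈ s) : rankBy s f x ∈ Icc 1 #s :=
  mem_Icc.mpr ⟨card_pos.mpr ⟨x, by simp [hx]⟩, card_filter_le _ _⟩

lemma rankBy_injOn (hf : Set.InjOn f s) : Set.InjOn (rankBy s f) s := fun _ hx _ hy h =>
  hf hx hy <| le_antisymm ((rankBy_le_rankBy_iff hx).mp h.le) ((rankBy_le_rankBy_iff hy).mp h.ge)

lemma rankBy_surjOn (hf : Set.InjOn f s) {v : ℕ} (hv : v ∈ Icc 1 #s) :
    ∃ x ∈ s, rankBy s f x = v := by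
  obtain ⟨x, hx, h⟩ := surj_on_of_inj_on_of_card_le (fun x _ => rankBy s f x)
    (fun _ hx => rankBy_mem_Icc hx) (fun _ _ hx hy h => rankBy_injOn hf hx hy h) (by simp) v hv
  exact ⟨x, hx, h.symm⟩

lemma rankBy_congr {γ : Type*} [LinearOrder γ] {g : β → γ} (hf : Set.InjOn f s)
    (hfg : ∀ x ∈ s, ∀ y ∈ s, f x < f y → g x < g y) (hx : x ∈ s) :
    rankBy s g x = rankBy s f x := by
  refine congrArg card <| filter_congr fun y hy => ⟨fun h => ?_, fun h => ?_⟩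
  · by_contra! hlt
    exact h.not_gt (hfg x hx y hy hlt)
  · rcases h.eq_or_lt with h | h
    · rw [hf hy hx h]
    · exact (hfg y hy x hx h).le

lemma rankBy_eq_self {s : Finset β} {f : β → ℕ} (hf : Set.InjOn f s)
    (himg : s.image f = Icc 1 #s) (hx : x ∈ s) : rankBy s f x = f x := by
  have hfx : f x ∈ Icc 1 #s := himg ▸ mem_image_of_mem f hx
  have hIcc : {v ∈ Icc 1 #s | v ≤ f x} = Icc 1 (f x) := by
    ext v
    simp only [mem_filter, mem_Icc] at hfx ⊢
    omega
  rw [rankBy, ← card_image_of_injOn (hf.mono (filter_subset _ _)),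
    ← filter_image (p := (· ≤ f x)), himg, hIcc, Nat.card_Icc, Nat.add_sub_cancel]

end Rank

section DestandValue

open Classical in
noncomputable def destandValue (D : Set ℕ) (v : ℕ) : ℕ := 1 + #{d ∈ range v | d ∈ D}

variable {D : Set ℕ} {u v : ℕ}

open Classical in
lemma destandValue_add (huv : u ≤ v) :
    destandValue D v = destandValue D u + #{d ∈ Ico u v | d ∈ D} := by
  rw [destandValue, destandValue, range_eq_Ico, range_eq_Ico,
    ← Ico_union_Ico_eq_Ico (Nat.zero_le u) huv, filter_union,
    card_union_of_disjoint (disjoint_filter_filter (Ico_disjoint_Ico_consecutive _ _ _)),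
    add_assoc]

lemma destandValue_mono (huv : u ≤ v) : destandValue D u ≤ destandValue D v :=
  (destandValue_add huv).symm ▸ Nat.le_add_right _ _

open Classical in
lemma destandValue_succ (v : ℕ) :
    destandValue D (v + 1) = destandValue D v + if v ∈ D then 1 else 0 := by
  rw [destandValue_add (Nat.le_succ v), Nat.Ico_succ_singleton, filter_singleton]
  split_ifs <;> rfl

lemma notMem_of_destandValue_eq (huv : u ≤ v) (h : destandValue D u = destandValue D v)
    {d : ℕ} (hud : u ≤ d) (hdv : d < v) : d ∉ D := by
  classical
  rw [destandValue_add huv, left_eq_add, card_eq_zero, filter_eq_empty_iff] at h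
  exact h (mem_Ico.mpr ⟨hud, hdv⟩)

lemma destandValue_one (hD : 0 ∉ D) : destandValue D 1 = 1 := by
  simp [hD, destandValue]

lemma destandValue_of_subset_Iio (hD : D ⊆ Set.Iio v) : destandValue D v = 1 + D.ncard := by
  classical
  rw [destandValue, ← Set.ncard_coe_finset]
  congr 2
  ext d
  simpa using fun hd => hD hd

end DestandValue

lemma zero_notMem_desSet (T : SSYT p) : 0 ∉ DesSet p T := fun h => by simp [DesSet] at h

lemma desSet_subset_Iio (T : SSYT p) : DesSet p T ⊆ Set.Iio n := fun _ ⟨h1, h2, _⟩ => by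
  simp only [Set.mem_Iio]; omega

namespace IsSYT

variable {T : SSYT p} (hT : IsSYT p T)
include hT

lemma image_cells : (cells p).image (fun c : ℕ × ℕ => T.entry c.1 c.2) = Icc 1 n := by
  refine (eq_of_subset_of_card_le (fun v hv => ?_) ?_).symm
  · obtain ⟨c, ⟨hc, he⟩, -⟩ := hT v (mem_Icc.mp hv).1 (mem_Icc.mp hv).2
    exact mem_image.mpr ⟨c, mem_cells.mpr hc, he⟩
  · simpa [card_cells] using
      card_image_le (s := cells p) (f := fun c : ℕ × ℕ => T.entry c.1 c.2)

lemma injOn : Set.InjOn (fun c : ℕ × ℕ => T.entry c.1 c.2) (cells p) :=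
  injOn_of_card_image_eq <| by rw [hT.image_cells, card_cells, Nat.card_Icc, Nat.add_sub_cancel]

lemma entry_le {i j : ℕ} (h : cellMem p i j) : T.entry i j ≤ n :=
  (mem_Icc.mp (hT.image_cells ▸ mem_image_of_mem _ (mem_cells.mpr h) :
    T.entry (i, j).1 (i, j).2 ∈ Icc 1 n)).2

lemma eq_of_entry_eq {c c' : ℕ × ℕ} (hc : cellMem p c.1 c.2) (hc' : cellMem p c'.1 c'.2)
    (he : T.entry c.1 c.2 = T.entry c'.1 c'.2) : c = c' :=
  hT.injOn (mem_cells.mpr hc) (mem_cells.mpr hc') he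

section Consecutive

variable {c c' : ℕ × ℕ} (hc : cellMem p c.1 c.2) (hc' : cellMem p c'.1 c'.2)
  {v : ℕ} (he : T.entry c.1 c.2 = v) (he' : T.entry c'.1 c'.2 = v + 1)
include hc hc' he he'

lemma mem_desSet_iff : v ∈ DesSet p T ↔ c.1 < c'.1 := by
  constructor
  · rintro ⟨-, -, r, j, r', j', hrj, hrj', hv, hv', hr⟩
    rwa [hT.eq_of_entry_eq (c' := (r, j)) hc hrj (he.trans hv.symm),
      hT.eq_of_entry_eq (c' := (r', j')) hc' hrj' (he'.trans hv'.symm)]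
  · intro hr
    have := T.pos _ _ hc
    have := hT.entry_le hc'
    exact ⟨by omega, by omega, _, _, _, _, hc, hc', he, he', hr⟩

lemma col_le_of_mem_desSet (hv : v ∈ DesSet p T) : c'.2 ≤ c.2 := by
  have hrow := (hT.mem_desSet_iff hc hc' he he').mp hv
  by_contra! hcol
  have hx : cellMem p c'.1 c.2 := cellMem_of_col_le hc' hcol.le
  have h1 := T.colStrict c.1 c'.1 c.2 hrow hx
  have h2 := T.rowWeak c'.1 c.2 c'.2 hcol hc'
  have := hT.eq_of_entry_eq (c := (c'.1, c.2)) hx hc' (by simp only; omega)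
  simp only [Prod.ext_iff] at this
  omega

lemma col_lt_of_notMem_desSet (hv : v ∉ DesSet p T) : c.2 < c'.2 :=
  SSYT.col_lt_of_entry_lt (T := T) hc (by omega) <|
    not_lt.mp <| (hT.mem_desSet_iff hc hc' he he').not.mp hv

end Consecutive

lemma col_lt_of_forall_notMem_desSet {c c' : ℕ × ℕ} (hc : cellMem p c.1 c.2)
    (hc' : cellMem p c'.1 c'.2) (hlt : T.entry c.1 c.2 < T.entry c'.1 c'.2)
    (hnd : ∀ d, T.entry c.1 c.2 ≤ d → d < T.entry c'.1 c'.2 → d ∉ DesSet p T) :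
    c.2 < c'.2 := by
  have hpos := T.pos _ _ hc
  have hle := hT.entry_le hc'
  suffices ∀ k, T.entry c.1 c.2 < k → k ≤ T.entry c'.1 c'.2 → ∀ x : ℕ × ℕ,
      cellMem p x.1 x.2 → T.entry x.1 x.2 = k → c.2 < x.2 from this _ hlt le_rfl c' hc' rfl
  intro k hk
  induction k, hk using Nat.le_induction with
  | base => exact fun _ x hx hxe => hT.col_lt_of_notMem_desSet hc hx rfl hxe (hnd _ le_rfl hlt)
  | succ k hk ih =>
    intro hkc x hx hxe
    obtain ⟨y, ⟨hy, hye⟩, -⟩ := hT k (by omega) (by omega)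
    exact (ih (by omega) y hy hye).trans <|
      hT.col_lt_of_notMem_desSet hy hx hye hxe (hnd k (by omega) (by omega))

lemma col_lt_of_destandValue_eq {c c' : ℕ × ℕ} (hc : cellMem p c.1 c.2)
    (hc' : cellMem p c'.1 c'.2) (hlt : T.entry c.1 c.2 < T.entry c'.1 c'.2)
    (heq : destandValue (DesSet p T) (T.entry c.1 c.2) =
      destandValue (DesSet p T) (T.entry c'.1 c'.2)) : c.2 < c'.2 :=
  hT.col_lt_of_forall_notMem_desSet hc hc' hlt fun _ => notMem_of_destandValue_eq hlt.le heq

end IsSYT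

noncomputable def destandardize (T : SSYT p) (hT : IsSYT p T) : SSYT p where
  entry i j := if cellMem p i j then destandValue (DesSet p T) (T.entry i j) else 0
  pos i j h := by simp only [if_pos h, destandValue]; omega
  zeros i j h := if_neg h
  rowWeak i j1 j2 hj hc := by
    simp only [if_pos hc, if_pos (cellMem_of_col_le hc hj.le)]
    exact destandValue_mono (T.rowWeak i j1 j2 hj hc)
  colStrict i1 i2 j hi hc := by
    have hc1 := cellMem_of_row_le hc hi.le
    simp only [if_pos hc, if_pos hc1]
    have hlt := T.colStrict i1 i2 j hi hc
    refine (destandValue_mono hlt.le).lt_of_ne fun heq => ?_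
    exact (hT.col_lt_of_destandValue_eq (c := (i1, j)) (c' := (i2, j)) hc1 hc hlt heq).ne rfl

section Destandardize

variable {T : SSYT p} (hT : IsSYT p T)

lemma destandardize_entry {i j : ℕ} (h : cellMem p i j) :
    (destandardize T hT).entry i j = destandValue (DesSet p T) (T.entry i j) := if_pos h

lemma destandardize_entry_le {i j : ℕ} (h : cellMem p i j) :
    (destandardize T hT).entry i j ≤ 1 + (DesSet p T).ncard := by
  rw [destandardize_entry hT h, ← destandValue_of_subset_Iio (desSet_subset_Iio T)]
  exact destandValue_mono (hT.entry_le h)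

lemma exists_destandardize_entry_eq (hn : 1 ≤ n) :
    ∃ i j, cellMem p i j ∧ (destandardize T hT).entry i j = 1 + (DesSet p T).ncard := by
  obtain ⟨c, ⟨hc, he⟩, -⟩ := hT n hn le_rfl
  refine ⟨c.1, c.2, hc, ?_⟩
  rw [destandardize_entry hT hc, he, destandValue_of_subset_Iio (desSet_subset_Iio T)]

/-- The leftmost cell of a value `w ≥ 2` of the destandardization holds the smallest entry `u + 1`
of its block, so `u` is a descent, which places the cell of `u` as required. -/
lemma isQY_destandardize : IsQY p (destandardize T hT) := by
  intro w i j hw hc he hleft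
  rw [destandardize_entry hT hc] at he
  have hpos := T.pos i j hc
  have hle := hT.entry_le hc
  obtain ⟨u, hu, hij⟩ : ∃ u, 1 ≤ u ∧ T.entry i j = u + 1 := by
    refine ⟨T.entry i j - 1, ?_, by omega⟩
    by_contra! h1
    rw [show T.entry i j = 1 by omega, destandValue_one (zero_notMem_desSet T)] at he
    omega
  rw [hij, destandValue_succ] at he
  obtain ⟨y, ⟨hy, hye⟩, -⟩ := hT u hu (by omega)
  by_cases hdes : u ∈ DesSet p T
  · refine ⟨y.1, y.2, hy, ?_, (hT.mem_desSet_iff (c' := (i, j)) hy hc hye hij).mp hdes,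
      hT.col_le_of_mem_desSet (c' := (i, j)) hy hc hye hij hdes⟩
    rw [destandardize_entry hT hy, hye]
    rw [if_pos hdes] at he
    omega
  · have := hleft y.1 y.2 hy <| by
      rw [destandardize_entry hT hy, hye, ← he, if_neg hdes, add_zero]
    exact absurd this (hT.col_lt_of_notMem_desSet (c' := (i, j)) hy hc hye hij hdes).not_ge

end Destandardize

def stdKey (S : SSYT p) (c : ℕ × ℕ) : ℕ ×ₗ ℕ := toLex (S.entry c.1 c.2, c.2)

section StdKey

variable {S : SSYT p} {c c' : ℕ × ℕ}

lemma stdKey_lt_stdKey_iff :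
    stdKey S c < stdKey S c' ↔ S.entry c.1 c.2 < S.entry c'.1 c'.2 ∨
      S.entry c.1 c.2 = S.entry c'.1 c'.2 ∧ c.2 < c'.2 :=
  Prod.Lex.toLex_lt_toLex

lemma stdKey_le_stdKey_iff :
    stdKey S c ≤ stdKey S c' ↔ S.entry c.1 c.2 < S.entry c'.1 c'.2 ∨
      S.entry c.1 c.2 = S.entry c'.1 c'.2 ∧ c.2 ≤ c'.2 :=
  Prod.Lex.toLex_le_toLex

lemma entry_le_of_stdKey_le (h : stdKey S c ≤ stdKey S c') :
    S.entry c.1 c.2 ≤ S.entry c'.1 c'.2 := by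
  rcases stdKey_le_stdKey_iff.mp h with h | ⟨h, -⟩ <;> omega

lemma col_le_of_stdKey_le (h : stdKey S c ≤ stdKey S c')
    (he : S.entry c.1 c.2 = S.entry c'.1 c'.2) : c.2 ≤ c'.2 := by
  rcases stdKey_le_stdKey_iff.mp h with h | ⟨-, h⟩
  · omega
  · exact h

variable (S) in
lemma stdKey_injOn : Set.InjOn (stdKey S) (cells p) := fun c hc c' hc' h => by
  obtain ⟨hval, hcol⟩ : S.entry c.1 c.2 = S.entry c'.1 c'.2 ∧ c.2 = c'.2 :=
    Prod.ext_iff.mp (toLex_inj.mp h)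
  rw [mem_coe, mem_cells] at hc hc'
  rw [hcol] at hc hval
  exact Prod.ext (S.row_eq_of_entry_eq hc hc' hval) hcol

end StdKey

def standardize (S : SSYT p) : SSYT p where
  entry i j := if cellMem p i j then rankBy (cells p) (stdKey S) (i, j) else 0
  pos i j h := by
    simp only [if_pos h]
    exact (mem_Icc.mp (rankBy_mem_Icc (mem_cells.mpr h))).1
  zeros i j h := if_neg h
  rowWeak i j1 j2 hj hc := by
    simp only [if_pos hc, if_pos (cellMem_of_col_le hc hj.le)]
    refine (rankBy_le_rankBy_iff (mem_cells.mpr (cellMem_of_col_le hc hj.le))).mpr <|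
      stdKey_le_stdKey_iff.mpr ?_
    rcases (S.rowWeak i j1 j2 hj hc).eq_or_lt with h | h
    · exact Or.inr ⟨h, hj.le⟩
    · exact Or.inl h
  colStrict i1 i2 j hi hc := by
    simp only [if_pos hc, if_pos (cellMem_of_row_le hc hi.le)]
    exact (rankBy_lt_rankBy_iff (mem_cells.mpr hc)).mpr <|
      stdKey_lt_stdKey_iff.mpr (Or.inl (S.colStrict i1 i2 j hi hc))

section Standardize

variable {S : SSYT p} {c c' : ℕ × ℕ}

lemma standardize_entry (h : cellMem p c.1 c.2) :
    (standardize S).entry c.1 c.2 = rankBy (cells p) (stdKey S) c := if_pos h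

lemma standardize_lt_standardize_iff (hc : cellMem p c.1 c.2) (hc' : cellMem p c'.1 c'.2) :
    (standardize S).entry c.1 c.2 < (standardize S).entry c'.1 c'.2 ↔
      stdKey S c < stdKey S c' := by
  rw [standardize_entry hc, standardize_entry hc', rankBy_lt_rankBy_iff (mem_cells.mpr hc')]

lemma standardize_le_standardize_iff (hc : cellMem p c.1 c.2) (hc' : cellMem p c'.1 c'.2) :
    (standardize S).entry c.1 c.2 ≤ (standardize S).entry c'.1 c'.2 ↔
      stdKey S c ≤ stdKey S c' := by
  rw [standardize_entry hc, standardize_entry hc', rankBy_le_rankBy_iff (mem_cells.mpr hc)]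

variable (S) in
lemma isSYT_standardize : IsSYT p (standardize S) := by
  intro v hv1 hv2
  obtain ⟨c, hc, hcv⟩ :=
    rankBy_surjOn (stdKey_injOn S) (mem_Icc.mpr ⟨hv1, (card_cells p).symm ▸ hv2⟩)
  have hc' := mem_cells.mp hc
  refine ⟨c, ⟨hc', (standardize_entry hc').trans hcv⟩, fun c' ⟨hc'', hc'v⟩ => ?_⟩
  refine rankBy_injOn (stdKey_injOn S) (mem_cells.mpr hc'') hc ?_
  rw [← standardize_entry hc'', hc'v, hcv]

lemma stdKey_le_or_le_of_standardize_succ {x : ℕ × ℕ} (hc : cellMem p c.1 c.2)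
    (hc' : cellMem p c'.1 c'.2) (hx : cellMem p x.1 x.2) {v : ℕ}
    (he : (standardize S).entry c.1 c.2 = v) (he' : (standardize S).entry c'.1 c'.2 = v + 1) :
    stdKey S x ≤ stdKey S c ∨ stdKey S c' ≤ stdKey S x := by
  rw [← standardize_le_standardize_iff hx hc, ← standardize_le_standardize_iff hc' hx]
  omega

end Standardize

namespace IsQY

variable {S : SSYT p} (hqy : IsQY p S)
include hqy

lemma exists_entry_pred {w : ℕ} (hw : 2 ≤ w) (h : ∃ i j, cellMem p i j ∧ S.entry i j = w) :
    ∃ i j, cellMem p i j ∧ S.entry i j = w - 1 := by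
  obtain ⟨i, j, hc, he⟩ := h
  obtain ⟨c, hc, hmin⟩ := exists_min_image {c ∈ cells p | S.entry c.1 c.2 = w} Prod.snd
    ⟨(i, j), mem_filter.mpr ⟨mem_cells.mpr hc, he⟩⟩
  obtain ⟨hc, he⟩ := mem_filter.mp hc
  obtain ⟨i', j', hc', he', -⟩ := hqy w c.1 c.2 hw (mem_cells.mp hc) he
    fun i' j' hx hxe => hmin (i', j') (mem_filter.mpr ⟨mem_cells.mpr hx, hxe⟩)
  exact ⟨i', j', hc', he'⟩

lemma exists_entry_eq {m w : ℕ} (hmax : ∃ i j, cellMem p i j ∧ S.entry i j = m) (hw : 1 ≤ w)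
    (hwm : w ≤ m) : ∃ i j, cellMem p i j ∧ S.entry i j = w :=
  Nat.decreasingInduction' (P := fun k => ∃ i j, cellMem p i j ∧ S.entry i j = k)
    (fun _ _ hwk h => hqy.exists_entry_pred (by omega) h) hwm hmax

variable {m : ℕ} (hbd : ∀ i j, cellMem p i j → S.entry i j ≤ m)
  (hmax : ∃ i j, cellMem p i j ∧ S.entry i j = m)

section Consecutive

variable {c c' : ℕ × ℕ} (hc : cellMem p c.1 c.2) (hc' : cellMem p c'.1 c'.2) {v : ℕ}
  (he : (standardize S).entry c.1 c.2 = v) (he' : (standardize S).entry c'.1 c'.2 = v + 1)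
include hc hc' he he'

/-- The cell `c'` is the leftmost occurrence of its value, so the quasi-Yamanouchi condition
yields a cell of value `S c` strictly below `c'` and weakly right of it, hence weakly above `c`. -/
lemma mem_desSet_standardize (hjump : S.entry c'.1 c'.2 = S.entry c.1 c.2 + 1) :
    v ∈ DesSet p (standardize S) := by
  have hleft : ∀ i' j', cellMem p i' j' → S.entry i' j' = S.entry c'.1 c'.2 →
      c'.2 ≤ j' := by
    intro i' j' hx hxe
    rcases stdKey_le_or_le_of_standardize_succ (x := (i', j')) hc hc' hx he he' with h | h
    · have := entry_le_of_stdKey_le h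
      simp only at this
      omega
    · exact col_le_of_stdKey_le h hxe.symm
  obtain ⟨i', j', hy, hye, hrow, -⟩ :=
    hqy _ c'.1 c'.2 (by have := S.pos _ _ hc; omega) hc' rfl hleft
  have hye' : S.entry (i', j').1 (i', j').2 = S.entry c.1 c.2 := by simp only; omega
  have hyc : c.1 ≤ i' := by
    rcases stdKey_le_or_le_of_standardize_succ (x := (i', j')) hc hc' hy he he' with h | h
    · exact S.row_le_of_entry_eq hy hc hye' (col_le_of_stdKey_le h hye')
    · have := entry_le_of_stdKey_le h
      omega
  exact ((isSYT_standardize S).mem_desSet_iff hc hc' he he').mpr (by omega)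

include hbd hmax in
open Classical in
lemma entry_standardize_succ :
    S.entry c'.1 c'.2 = S.entry c.1 c.2 + if v ∈ DesSet p (standardize S) then 1 else 0 := by
  have hkey := (standardize_lt_standardize_iff (S := S) hc hc').mp (by omega)
  rcases stdKey_lt_stdKey_iff.mp hkey with hlt | ⟨heq, hcol⟩
  · have hjump : S.entry c'.1 c'.2 = S.entry c.1 c.2 + 1 := by
      by_contra hne
      obtain ⟨i, j, hx, hxe⟩ := hqy.exists_entry_eq hmax (w := S.entry c.1 c.2 + 1) (by omega)
        (by have := hbd _ _ hc'; omega)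
      rcases stdKey_le_or_le_of_standardize_succ (x := (i, j)) hc hc' hx he he' with h | h <;>
      · have := entry_le_of_stdKey_le h
        simp only at this
        omega
    rw [if_pos (hqy.mem_desSet_standardize hc hc' he he' hjump), hjump]
  · have hrow := S.row_le_of_entry_eq hc hc' heq hcol.le
    rw [if_neg fun hdes =>
      (((isSYT_standardize S).mem_desSet_iff hc hc' he he').mp hdes).not_ge hrow, heq, add_zero]

end Consecutive

include hbd hmax

lemma destandValue_standardize {v : ℕ} (hv : 1 ≤ v) {c : ℕ × ℕ} (hc : cellMem p c.1 c.2)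
    (he : (standardize S).entry c.1 c.2 = v) :
    destandValue (DesSet p (standardize S)) v = S.entry c.1 c.2 := by
  induction v, hv using Nat.le_induction generalizing c with
  | base =>
    rw [destandValue_one (zero_notMem_desSet _)]
    by_contra! hne
    have := S.pos _ _ hc
    obtain ⟨i, j, hx, hxe⟩ := hqy.exists_entry_eq hmax le_rfl (by have := hbd _ _ hc; omega)
    have hlt : (standardize S).entry i j < (standardize S).entry c.1 c.2 :=
      (standardize_lt_standardize_iff (c := (i, j)) hx hc).mpr <|
        stdKey_lt_stdKey_iff.mpr (Or.inl (by simp only; omega))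
    have := (standardize S).pos i j hx
    omega
  | succ v hv ih =>
    have := (isSYT_standardize S).entry_le hc
    obtain ⟨y, ⟨hy, hye⟩, -⟩ := isSYT_standardize S v hv (by omega)
    rw [destandValue_succ, ih hy hye, hqy.entry_standardize_succ hbd hmax hy hc hye he]

lemma destandardize_standardize : destandardize (standardize S) (isSYT_standardize S) = S := by
  ext i j
  by_cases h : cellMem p i j
  · rw [destandardize_entry _ h,
      hqy.destandValue_standardize hbd hmax ((standardize S).pos i j h) (c := (i, j)) h rfl]
  · rw [SSYT.zeros _ i j h, SSYT.zeros _ i j h]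

lemma ncard_desSet_standardize : (DesSet p (standardize S)).ncard = m - 1 := by
  have hS := hqy.destandardize_standardize hbd hmax
  obtain ⟨i, j, hc, he⟩ := hmax
  have hle := destandardize_entry_le (isSYT_standardize S) hc
  obtain ⟨i', j', hc', he'⟩ :=
    exists_destandardize_entry_eq (isSYT_standardize S) (by have := hc.lt; omega)
  rw [hS] at hle he'
  have := hbd i' j' hc'
  omega

end IsQY

namespace IsSYT

variable {T : SSYT p} (hT : IsSYT p T)
include hT

lemma stdKey_destandardize_lt_of_lt {c c' : ℕ × ℕ} (hc : cellMem p c.1 c.2)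
    (hc' : cellMem p c'.1 c'.2) (hlt : T.entry c.1 c.2 < T.entry c'.1 c'.2) :
    stdKey (destandardize T hT) c < stdKey (destandardize T hT) c' := by
  rw [stdKey_lt_stdKey_iff, destandardize_entry hT hc, destandardize_entry hT hc']
  rcases (destandValue_mono hlt.le).lt_or_eq with h | h
  · exact Or.inl h
  · exact Or.inr ⟨h, hT.col_lt_of_destandValue_eq hc hc' hlt h⟩

lemma standardize_destandardize : standardize (destandardize T hT) = T := by
  ext i j
  by_cases h : cellMem p i j
  · have hmem : (i, j) ∈ cells p := mem_cells.mpr h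
    rw [standardize_entry (c := (i, j)) h,
      rankBy_congr (f := fun c : ℕ × ℕ => T.entry c.1 c.2) hT.injOn
        (fun _ hx _ hy => hT.stdKey_destandardize_lt_of_lt (mem_cells.mp hx) (mem_cells.mp hy))
        hmem,
      rankBy_eq_self hT.injOn (by rw [hT.image_cells, card_cells]) hmem]
  · rw [SSYT.zeros _ i j h, SSYT.zeros _ i j h]

end IsSYT

noncomputable def standardizeEquiv {m : ℕ} (hm : 1 ≤ m) (hmn : m ≤ n) :
    {S : SSYT p // IsQY p S ∧ (∀ i j, cellMem p i j → S.entry i j ≤ m) ∧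
      ∃ i j, cellMem p i j ∧ S.entry i j = m} ≃
    {T : SSYT p // IsSYT p T ∧ (DesSet p T).ncard = m - 1} where
  toFun S := ⟨standardize S.1, isSYT_standardize S.1,
    IsQY.ncard_desSet_standardize S.2.1 S.2.2.1 S.2.2.2⟩
  invFun T := ⟨destandardize T.1 T.2.1, isQY_destandardize T.2.1,
    fun i j h => by
      have := destandardize_entry_le T.2.1 h
      have := T.2.2
      omega,
    by
      obtain ⟨i, j, h, he⟩ := exists_destandardize_entry_eq T.2.1 (hm.trans hmn)
      exact ⟨i, j, h, by rw [he, T.2.2]; omega⟩⟩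
  left_inv S := Subtype.ext (IsQY.destandardize_standardize S.2.1 S.2.2.1 S.2.2.2)
  right_inv T := Subtype.ext (IsSYT.standardize_destandardize T.2.1)

/-- For a partition `p` of `n` and `1 ≤ m ≤ n`, the number of
quasi-Yamanouchi tableaux of shape `p` with maximum entry exactly `m` equals the number
of standard Young tableaux of shape `p` with exactly `m - 1` descents. -/
theorem statement3 (n m : ℕ) (p : Nat.Partition n) (hm1 : 1 ≤ m) (hmn : m ≤ n) :
    QYTeq p m =
      Nat.card {T : SSYT p // IsSYT p T ∧ (DesSet p T).ncard = m - 1} :=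
  Nat.card_congr (standardizeEquiv hm1 hmn)
end
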